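/- Fix integers n, τ, k ≥ 1, reals 0 < μ ≤ L, κ = L/μ, and task losses f_1, …, f_n : ℝ^d → ℝ, each L-smooth and μ-strongly convex. Let α, β > 0 satisfy α ≤ 1/(4·√κ·L) and β ≤ 1/(20L). For each i let z_i : ℝ^d → ℝ^d map x to the unique minimizer of w ↦ f_i(w) + ‖w − x‖²/(2α), and set ∇F_i(x) = (x − z_i(x))/α. Let x* ∈ ℝ^d satisfy Σ_{i=1}^n ∇F_i(x*) = 0, and let σ*² = (1/n)·Σ_{i=1}^n ‖∇F_i(x*)‖². Given a starting point x^0 ∈ ℝ^d, for each history S = (i_{t,j})_{0≤t<k, 0≤j<τ} ∈ ({1,…,n}^τ)^k define the FO-MAML iterates x^0(S) = x^0 and x^{t+1}(S) = x^t(S) − (β/τ)·Σ_{j<τ} ∇f_{i_{t,j}}( x^t(S) − α·∇f_{i_{t,j}}(x^t(S)) ). Then the uniform average over all histories S of ‖x^k(S) − x*‖² is at most (1 − βμ/4)^k·‖x^0 − x*‖² + (16/μ)·( 2α²L²/μ + β/τ + β )·σ*². -/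

import Mathlib

set_option maxHeartbeats 1000000

open RealInnerProductSpace

open InnerProductSpace in
lemma smooth_upper {E : Type*} [NormedAddCommGroup E] [InnerProductSpace ℝ E] [CompleteSpace E]
    (f : E → ℝ) (f' : E → E) (L : ℝ) (hL : 0 ≤ L)
    (hgrad : ∀ x, HasGradientAt f (f' x) x)
    (hlip : ∀ x y, ‖f' x - f' y‖ ≤ L * ‖x - y‖) (x y : E) :
    f y ≤ f x + @inner ℝ _ _ (f' x) (y - x) + L * ‖y - x‖ ^ 2 := by
  set g : E → ℝ := fun w => f w - @inner ℝ _ _ (f' x) w with hg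
  have hder : ∀ w, HasFDerivAt g (toDual ℝ E (f' w) - toDual ℝ E (f' x)) w := by
    intro w
    exact ((hgrad w).hasFDerivAt).sub (toDual ℝ E (f' x)).hasFDerivAt
  have hseg : ∀ w ∈ segment ℝ x y, ‖w - x‖ ≤ ‖y - x‖ := by
    rintro w ⟨a, b, ha, hb, hab, rfl⟩
    have : a • x + b • y - x = b • (y - x) := by
      have hax : a = 1 - b := by linarith
      rw [hax]; module
    rw [this, norm_smul]
    have : ‖y - x‖ ≥ 0 := norm_nonneg _
    have hb1 : b ≤ 1 := by linarith
    calc ‖b‖ * ‖y - x‖ = b * ‖y - x‖ := by rw [Real.norm_of_nonneg hb]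
    _ ≤ 1 * ‖y - x‖ := by nlinarith
    _ = ‖y - x‖ := one_mul _
  have hmvt := (convex_segment x y).norm_image_sub_le_of_norm_hasFDerivWithin_le
      (f' := fun w => toDual ℝ E (f' w) - toDual ℝ E (f' x))
      (fun w _ => (hder w).hasFDerivWithinAt)
      (C := L * ‖y - x‖)
      (fun w hw => by
        have h1 : ‖toDual ℝ E (f' w) - toDual ℝ E (f' x)‖ = ‖f' w - f' x‖ := by
          rw [← LinearIsometryEquiv.map_sub, LinearIsometryEquiv.norm_map]
        rw [h1]
        calc ‖f' w - f' x‖ ≤ L * ‖w - x‖ := hlip w x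
        _ ≤ L * ‖y - x‖ := by
            have := hseg w hw
            nlinarith [norm_nonneg (w - x)])
      (left_mem_segment ℝ x y) (right_mem_segment ℝ x y)
  have h2 : g y - g x ≤ L * ‖y - x‖ * ‖y - x‖ := by
    have := le_trans (le_abs_self _) hmvt
    simpa [Real.norm_eq_abs] using this
  have h3 : g y - g x = f y - f x - @inner ℝ _ _ (f' x) (y - x) := by
    simp [hg, inner_sub_right]; ring
  nlinarith [h2, h3]

lemma coco {E : Type*} [NormedAddCommGroup E] [InnerProductSpace ℝ E] [CompleteSpace E]
    (f : E → ℝ) (f' : E → E) (L : ℝ) (hL : 0 < L)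
    (hgrad : ∀ x, HasGradientAt f (f' x) x)
    (hlip : ∀ x y, ‖f' x - f' y‖ ≤ L * ‖x - y‖)
    (hcvx : ∀ x y, f x + @inner ℝ _ _ (f' x) (y - x) ≤ f y) (x y : E) :
    (1 / (2 * L)) * ‖f' x - f' y‖ ^ 2 ≤ @inner ℝ _ _ (f' x - f' y) (x - y) := by
  have key : ∀ a b : E, (1 / (4 * L)) * ‖f' a - f' b‖ ^ 2 ≤
      f a - f b - @inner ℝ _ _ (f' b) (a - b) := by
    intro a b
    set v := f' a - f' b with hv
    set w := a - (2 * L)⁻¹ • v with hw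
    have h1 : f w ≤ f a + @inner ℝ _ _ (f' a) (w - a) + L * ‖w - a‖ ^ 2 :=
      smooth_upper f f' L hL.le hgrad hlip a w
    have h2 : f b + @inner ℝ _ _ (f' b) (w - b) ≤ f w := hcvx b w
    have hwa : w - a = -((2 * L)⁻¹ • v) := by rw [hw]; abel
    have hnorm : ‖w - a‖ ^ 2 = (2 * L)⁻¹ ^ 2 * ‖v‖ ^ 2 := by
      rw [hwa, norm_neg, norm_smul, mul_pow, Real.norm_eq_abs, sq_abs]
    have hia : @inner ℝ _ _ (f' a) (w - a) = -((2 * L)⁻¹ * @inner ℝ _ _ (f' a) v) := by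
      rw [hwa, inner_neg_right, real_inner_smul_right]
    have hib : @inner ℝ _ _ (f' b) (w - b) =
        @inner ℝ _ _ (f' b) (a - b) - (2 * L)⁻¹ * @inner ℝ _ _ (f' b) v := by
      have : w - b = (a - b) - (2 * L)⁻¹ • v := by rw [hw]; abel
      rw [this, inner_sub_right, real_inner_smul_right]
    have hvv : @inner ℝ _ _ (f' a) v - @inner ℝ _ _ (f' b) v = ‖v‖ ^ 2 := by
      rw [← inner_sub_left, ← hv, real_inner_self_eq_norm_sq]
    have hLpos : (0:ℝ) < 2 * L := by linarith
    have h3 : f b + @inner ℝ _ _ (f' b) (a - b) - (2 * L)⁻¹ * @inner ℝ _ _ (f' b) v ≤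
        f a - (2 * L)⁻¹ * @inner ℝ _ _ (f' a) v + L * ((2 * L)⁻¹ ^ 2 * ‖v‖ ^ 2) := by
      rw [hib] at h2; rw [hia, hnorm] at h1; linarith
    have hinv : (2 * L)⁻¹ * (2 * L) = 1 := inv_mul_cancel₀ hLpos.ne'
    have hiv : (2 * L)⁻¹ * @inner ℝ _ _ (f' a) v - (2 * L)⁻¹ * @inner ℝ _ _ (f' b) v
        = (2 * L)⁻¹ * ‖v‖ ^ 2 := by rw [← mul_sub, hvv]
    -- combine
    have : @inner ℝ _ _ (f' b) (a - b) + (2 * L)⁻¹ * ‖v‖ ^ 2 - L * (2 * L)⁻¹ ^ 2 * ‖v‖ ^ 2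
        ≤ f a - f b := by nlinarith [h3, hiv]
    have hsimp : (2 * L)⁻¹ * ‖v‖ ^ 2 - L * (2 * L)⁻¹ ^ 2 * ‖v‖ ^ 2 = (1 / (4 * L)) * ‖v‖ ^ 2 := by
      field_simp; ring
    nlinarith [this, hsimp]
  have k1 := key x y
  have k2 := key y x
  have hsym : ‖f' y - f' x‖ = ‖f' x - f' y‖ := norm_sub_rev _ _
  have hadd : (f x - f y - @inner ℝ _ _ (f' y) (x - y)) + (f y - f x - @inner ℝ _ _ (f' x) (y - x))
      = @inner ℝ _ _ (f' x - f' y) (x - y) := by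
    have h1 : @inner ℝ _ _ (f' x) (y - x) = -@inner ℝ _ _ (f' x) (x - y) := by
      rw [← inner_neg_right]; congr 1; abel
    rw [inner_sub_left, h1]; ring
  rw [hsym] at k2
  have hhalf : (1:ℝ) / (2 * L) * ‖f' x - f' y‖ ^ 2 = 2 * (1 / (4 * L) * ‖f' x - f' y‖ ^ 2) := by
    field_simp; ring
  linarith [k1, k2, hadd, hhalf]

lemma prox_fixed {E : Type*} [NormedAddCommGroup E] [InnerProductSpace ℝ E] [CompleteSpace E]
    (f : E → ℝ) (f' : E → E) (L : ℝ) (hL : 0 < L)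
    (hgrad : ∀ x, HasGradientAt f (f' x) x)
    (hlip : ∀ x y, ‖f' x - f' y‖ ≤ L * ‖x - y‖)
    (α : ℝ) (hα : 0 < α) (x m : E)
    (hmin : IsMinOn (fun w => f w + ‖w - x‖ ^ 2 / (2 * α)) Set.univ m) :
    f' m = α⁻¹ • (x - m) := by
  set w : E := f' m + α⁻¹ • (m - x) with hwdef
  clear_value w
  have hw0 : w = 0 := by
    by_contra hne
    set C : ℝ := L + 1 / (2 * α) with hC
    clear_value C
    have hCpos : 0 < C := by rw [hC]; positivity
    set t : ℝ := 1 / (2 * C) with ht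
    clear_value t
    have htpos : 0 < t := by rw [ht]; positivity
    have htC : t * C = 1 / 2 := by rw [ht]; field_simp
    have hmin' := isMinOn_iff.mp hmin (m - t • w) (Set.mem_univ _)
    -- upper bound f (m - t•w)
    have hup := smooth_upper f f' L hL.le hgrad hlip m (m - t • w)
    have hdiff : m - t • w - m = -(t • w) := by abel
    have hiu : @inner ℝ _ _ (f' m) (m - t • w - m) = -(t * @inner ℝ _ _ (f' m) w) := by
      rw [hdiff, inner_neg_right, real_inner_smul_right]
    have hnu : ‖m - t • w - m‖ ^ 2 = t ^ 2 * ‖w‖ ^ 2 := by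
      rw [hdiff, norm_neg, norm_smul, mul_pow, Real.norm_eq_abs, sq_abs]
    rw [hiu, hnu] at hup
    -- quadratic identity
    have hq : ‖m - t • w - x‖ ^ 2 = ‖m - x‖ ^ 2 - 2 * t * @inner ℝ _ _ (m - x) w
        + t ^ 2 * ‖w‖ ^ 2 := by
      have : m - t • w - x = (m - x) + (-(t • w)) := by abel
      rw [this, norm_add_sq_real, inner_neg_right, real_inner_smul_right, norm_neg,
        norm_smul, mul_pow, Real.norm_eq_abs, sq_abs]
      ring
    have hinner : t * @inner ℝ _ _ (f' m) w + α⁻¹ * (t * @inner ℝ _ _ (m - x) w)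
        = t * ‖w‖ ^ 2 := by
      have : @inner ℝ _ _ (f' m) w + α⁻¹ * @inner ℝ _ _ (m - x) w = @inner ℝ _ _ w w := by
        rw [hwdef, inner_add_left, real_inner_smul_left]
      have h2 := real_inner_self_eq_norm_sq w
      nlinarith [this]
    -- combine with min
    have key : f m + ‖m - x‖ ^ 2 / (2 * α) ≤ f (m - t • w) + ‖m - t • w - x‖ ^ 2 / (2 * α) := hmin'
    have hαpos : (0:ℝ) < 2 * α := by linarith
    have : 0 ≤ -(t * ‖w‖ ^ 2) + t ^ 2 * ‖w‖ ^ 2 * C := by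
      have hq' : ‖m - t • w - x‖ ^ 2 / (2 * α) = ‖m - x‖ ^ 2 / (2 * α)
          - (α⁻¹ * (t * @inner ℝ _ _ (m - x) w)) + t ^ 2 * ‖w‖ ^ 2 / (2 * α) := by
        rw [hq]; field_simp
      have hCexp : t ^ 2 * ‖w‖ ^ 2 * C = L * (t ^ 2 * ‖w‖ ^ 2) + t ^ 2 * ‖w‖ ^ 2 / (2 * α) := by
        rw [hC]; field_simp
      linarith [key, hup, hq', hinner, hCexp]
    have hwpos : 0 < ‖w‖ ^ 2 := pow_pos (norm_pos_iff.mpr hne) 2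
    have h7 : t ^ 2 * ‖w‖ ^ 2 * C = (t * C) * (t * ‖w‖ ^ 2) := by ring
    rw [htC] at h7
    nlinarith [this, h7, mul_pos htpos hwpos]
  have h := hw0
  rw [hwdef] at h
  have h2 : f' m = -(α⁻¹ • (m - x)) := eq_neg_of_add_eq_zero_left h
  rw [h2, ← smul_neg, neg_sub]

lemma sum_eval {n τ : ℕ} (j : Fin τ) (ψ : Fin n → ℝ) :
    (n : ℝ) * ∑ b : Fin τ → Fin n, ψ (b j) =
      (Fintype.card (Fin τ → Fin n) : ℝ) * ∑ i : Fin n, ψ i := by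
  classical
  set e := Equiv.funSplitAt j (Fin n) with he
  have h1 : ∑ b : Fin τ → Fin n, ψ (b j) = ∑ p : Fin n × ({ j' // j' ≠ j } → Fin n), ψ p.1 := by
    rw [← Equiv.sum_comp e (fun p => ψ p.1)]
    apply Finset.sum_congr rfl
    intro b _
    simp [he, Equiv.funSplitAt]
  have h2 : ∑ p : Fin n × ({ j' // j' ≠ j } → Fin n), ψ p.1
      = (Fintype.card ({ j' // j' ≠ j } → Fin n) : ℝ) * ∑ i : Fin n, ψ i := by
    rw [Fintype.sum_prod_type]
    simp only [Finset.sum_const, nsmul_eq_mul, Finset.card_univ]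
    rw [← Finset.mul_sum]
  have h3 : (Fintype.card (Fin τ → Fin n) : ℝ)
      = (n : ℝ) * (Fintype.card ({ j' // j' ≠ j } → Fin n) : ℝ) := by
    rw [Fintype.card_congr e, Fintype.card_prod]
    push_cast [Fintype.card_fin]
    ring
  rw [h1, h2, h3]; ring

lemma norm_sum_sq {E : Type*} [NormedAddCommGroup E] [InnerProductSpace ℝ E]
    {τ : ℕ} (u : Fin τ → E) :
    ‖∑ j : Fin τ, u j‖ ^ 2 ≤ (τ : ℝ) * ∑ j : Fin τ, ‖u j‖ ^ 2 := by
  have h1 : ‖∑ j : Fin τ, u j‖ ≤ ∑ j : Fin τ, ‖u j‖ := norm_sum_le _ _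
  have h2 : (∑ j : Fin τ, ‖u j‖) ^ 2 ≤ (∑ j : Fin τ, (1:ℝ) ^ 2) * ∑ j : Fin τ, ‖u j‖ ^ 2 := by
    have := Finset.sum_mul_sq_le_sq_mul_sq Finset.univ (fun _ : Fin τ => (1:ℝ)) (fun j => ‖u j‖)
    simpa using this
  have h3 : (∑ j : Fin τ, (1:ℝ) ^ 2) = (τ : ℝ) := by simp
  have h4 : ‖∑ j : Fin τ, u j‖ ^ 2 ≤ (∑ j : Fin τ, ‖u j‖) ^ 2 := by
    have hnn : (0:ℝ) ≤ ‖∑ j : Fin τ, u j‖ := norm_nonneg _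
    nlinarith [h1]
  rw [h3] at h2
  linarith

lemma scalar_core (nn R P A Hs T σs β μ L ε bt : ℝ)
    (hμ : 0 < μ) (hμL : μ ≤ L) (hβ : 0 < β) (hβL : β * L ≤ 1/20)
    (hε0 : 0 ≤ ε) (hε : ε ≤ 1/16) (hεL : ε * L ≤ μ/16)
    (hnn : 1 ≤ nn) (hR : 0 ≤ R) (hσ : 0 ≤ σs) (hT0 : 0 ≤ T) (hT : T^2 ≤ nn^2 * σs)
    (hbt : 0 ≤ bt)
    (hP1 : 2*μ/3*(nn*R^2) ≤ P)
    (hPh : P - ε*(nn*L*R^2 + R*T) ≤ A)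
    (hHs : Hs ≤ 8*L*P + 4*nn*σs) :
    nn*R^2 - 2*β*A + β^2*Hs ≤ nn*((1 - β*μ/4)*R^2 + 4*β*(2*ε/μ + bt + β)*σs) := by
  have hnn0 : (0:ℝ) < nn := by linarith
  have hq : (0:ℝ) ≤ nn * R^2 := by positivity
  have hP0 : (0:ℝ) ≤ P := le_trans (by positivity) hP1
  have h16 : (0:ℝ) < 16*μ*nn := by positivity
  have hRT : R*T ≤ nn*((μ/16)*R^2 + (4/μ)*σs) := by
    have id : 16*μ*nn*(nn*((μ/16)*R^2 + (4/μ)*σs)) = μ^2*nn^2*R^2 + 64*nn^2*σs := by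
      field_simp; ring
    have k2 : 16*μ*nn*(R*T) ≤ μ^2*nn^2*R^2 + 64*nn^2*σs := by
      nlinarith [sq_nonneg (nn*μ*R - 8*T), hT]
    have k3 : 16*μ*nn*(R*T) ≤ 16*μ*nn*(nn*((μ/16)*R^2 + (4/μ)*σs)) := by rw [id]; exact k2
    exact (mul_le_mul_iff_right₀ h16).mp k3
  have e1 : 2*β*(P - ε*(nn*L*R^2 + R*T)) ≤ 2*β*A :=
    mul_le_mul_of_nonneg_left hPh (by positivity)
  have e2 : β^2*Hs ≤ β^2*(8*L*P + 4*nn*σs) :=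
    mul_le_mul_of_nonneg_left hHs (by positivity)
  have h2 : 2*β*ε*(R*T) ≤ 2*β*ε*(nn*((μ/16)*R^2 + (4/μ)*σs)) :=
    mul_le_mul_of_nonneg_left hRT (by positivity)
  -- contraction part
  have hc : 4/5 ≤ 1 - 4*(β*L) := by linarith
  have hQ : (0:ℝ) ≤ 2*μ/3*(nn*R^2) := by positivity
  have e3 : 2*β*(1-4*(β*L))*(2*μ/3*(nn*R^2)) ≤ 2*β*(1-4*(β*L))*P :=
    mul_le_mul_of_nonneg_left hP1 (by nlinarith)
  have e5 : (4/5)*(2*β*(2*μ/3*(nn*R^2))) ≤ (1-4*(β*L))*(2*β*(2*μ/3*(nn*R^2))) :=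
    mul_le_mul_of_nonneg_right hc (by positivity)
  have h3 : -2*β*P + 8*β^2*L*P ≤ -(16/15)*β*μ*(nn*R^2) := by nlinarith [e3, e5]
  -- coefficient bounds
  have r1 : 2*β*(ε*L)*(nn*R^2) ≤ 2*β*(μ/16)*(nn*R^2) := by
    have := mul_le_mul_of_nonneg_left hεL (by positivity : (0:ℝ) ≤ 2*β)
    exact mul_le_mul_of_nonneg_right this hq
  have p3 : 2*β*ε*(μ/16)*(nn*R^2) ≤ (β*μ/128)*(nn*R^2) := by
    have h0 := mul_le_mul_of_nonneg_left hε (show (0:ℝ) ≤ 2*β*(μ/16) by positivity)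
    have h : 2*β*ε*(μ/16) ≤ β*μ/128 := by linarith [h0]
    exact mul_le_mul_of_nonneg_right h hq
  have hbt2 : (0:ℝ) ≤ 4*β*bt*(nn*σs) := by positivity
  have hβμq : (0:ℝ) ≤ β*μ*(nn*R^2) := by positivity
  have hμ' : μ ≠ 0 := ne_of_gt hμ
  have key : nn * (4 * β * (2 * ε / μ) * σs) = 2 * β * ε * (nn * (4 / μ * σs)) := by
    field_simp
  linarith [e1, e2, h2, h3, r1, p3, hbt2, hβμq, key]

lemma pairmono (a2 b2 s α μ : ℝ) (ha : 0 ≤ a2) (hb : 0 ≤ b2) (hs : μ * a2 ≤ s)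
    (hα : 0 < α) (hμ : 0 < μ) (hαμ : α * μ ≤ 1/4) :
    2*μ/3*(a2 + 2*α*s + α^2*b2) ≤ s + α*b2 := by
  have hs0 : 0 ≤ s := le_trans (by positivity) hs
  nlinarith [mul_nonneg (sub_nonneg.mpr hs) (by linarith : (0:ℝ) ≤ 1 - 4/3*(α*μ)),
    mul_nonneg (mul_nonneg hμ.le ha) (by linarith : (0:ℝ) ≤ 1/3 - 4/3*(α*μ)*(1/3)),
    mul_nonneg (mul_nonneg hα.le hb) (by linarith : (0:ℝ) ≤ 1 - 2/3*(α*μ)),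
    mul_nonneg (mul_nonneg hμ.le ha) (by linarith : (0:ℝ) ≤ 1/3 - (4/3)*(α*μ))]

lemma sq_bound (hv Dv gv ε : ℝ) (h0 : 0 ≤ hv) (hD : 0 ≤ Dv) (hg : 0 ≤ gv)
    (hε0 : 0 ≤ ε) (hε : ε ≤ 1/16) (h : hv ≤ (1+ε)*(Dv+gv)) :
    hv^2 ≤ 4*Dv^2 + 4*gv^2 := by
  have h1 : hv * hv ≤ ((1+ε)*(Dv+gv)) * ((1+ε)*(Dv+gv)) :=
    mul_self_le_mul_self h0 h
  have h2 : (0:ℝ) ≤ 2 - (1+ε)^2 := by nlinarith [sq_nonneg ε]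
  have h3 := mul_nonneg h2 (sq_nonneg (Dv+gv))
  nlinarith [h1, h3, sq_nonneg (Dv - gv)]

lemma core_step {d : ℕ} (n τ : ℕ) (hn : 1 ≤ n) (hτ : 1 ≤ τ)
    (L μ : ℝ) (hμ : 0 < μ) (hμL : μ ≤ L)
    (f : Fin n → EuclideanSpace ℝ (Fin d) → ℝ)
    (f' : Fin n → EuclideanSpace ℝ (Fin d) → EuclideanSpace ℝ (Fin d))
    (hgrad : ∀ i x, HasGradientAt (f i) (f' i x) x)
    (hlip : ∀ i x y, ‖f' i x - f' i y‖ ≤ L * ‖x - y‖)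
    (hsc : ∀ i x y, f i x + @inner ℝ _ _ (f' i x) (y - x) + μ / 2 * ‖y - x‖ ^ 2 ≤ f i y)
    (α β : ℝ) (hα : 0 < α) (hαle : α ≤ 1 / (4 * Real.sqrt (L / μ) * L))
    (hβ : 0 < β) (hβle : β ≤ 1 / (20 * L))
    (z : Fin n → EuclideanSpace ℝ (Fin d) → EuclideanSpace ℝ (Fin d))
    (hz : ∀ i x, IsMinOn (fun w => f i w + ‖w - x‖ ^ 2 / (2 * α)) Set.univ (z i x))
    (xstar : EuclideanSpace ℝ (Fin d))
    (hstar : ∑ i : Fin n, α⁻¹ • (xstar - z i xstar) = 0)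
    (σs : ℝ) (hσ : σs = (1 / (n : ℝ)) * ∑ i : Fin n, ‖α⁻¹ • (xstar - z i xstar)‖ ^ 2)
    (x : EuclideanSpace ℝ (Fin d)) :
    ∑ b : Fin τ → Fin n,
        ‖(x - (β / (τ : ℝ)) • ∑ j : Fin τ, f' (b j) (x - α • f' (b j) x)) - xstar‖ ^ 2
      ≤ (Fintype.card (Fin τ → Fin n) : ℝ) *
        ((1 - β * μ / 4) * ‖x - xstar‖ ^ 2
          + 4 * β * (2 * α ^ 2 * L ^ 2 / μ + β / (τ : ℝ) + β) * σs) := by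
  have hL : (0:ℝ) < L := lt_of_lt_of_le hμ hμL
  have hn0 : (0:ℝ) < (n:ℝ) := by exact_mod_cast Nat.lt_of_lt_of_le Nat.zero_lt_one hn
  have hτ0 : (0:ℝ) < (τ:ℝ) := by exact_mod_cast Nat.lt_of_lt_of_le Nat.zero_lt_one hτ
  -- numeric facts
  have hκ1 : 1 ≤ Real.sqrt (L / μ) := Real.one_le_sqrt.mpr ((one_le_div hμ).mpr hμL)
  have hκ0 : 0 < Real.sqrt (L / μ) := lt_of_lt_of_le one_pos hκ1
  have hden : (0:ℝ) < 4 * Real.sqrt (L / μ) * L := by positivity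
  have hαL4 : α * (4 * Real.sqrt (L / μ) * L) ≤ 1 := (le_div_iff₀ hden).mp hαle
  have hαL : α * L ≤ 1/4 := by nlinarith [mul_pos hα hL, hκ1]
  have hαμ : α * μ ≤ 1/4 := by nlinarith
  have hε : α^2*L^2 ≤ 1/16 := by
    nlinarith [mul_nonneg (by linarith : (0:ℝ) ≤ 1/4 - α*L)
      (by nlinarith [mul_pos hα hL] : (0:ℝ) ≤ 1/4 + α*L)]
  have hεL : (α^2*L^2) * L ≤ μ/16 := by
    have hκ2 : Real.sqrt (L / μ) ^ 2 = L / μ := Real.sq_sqrt (by positivity)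
    have h1 : (α * (4 * Real.sqrt (L / μ) * L))^2 ≤ 1 := by
      nlinarith [hαL4, mul_nonneg hα.le hden.le]
    have h2 : (α * (4 * Real.sqrt (L / μ) * L))^2 = 16 * α^2 * (Real.sqrt (L/μ))^2 * L^2 := by
      ring
    rw [h2, hκ2] at h1
    have h3 := mul_le_mul_of_nonneg_right h1 hμ.le
    have h4 : 16 * α^2 * (L / μ) * L^2 * μ = 16 * (α^2 * L^2 * L) := by
      field_simp
    rw [h4, one_mul] at h3
    linarith
  have hβL : β * L ≤ 1/20 := by
    have h1 : β * (20 * L) ≤ 1 := (le_div_iff₀ (by positivity)).mp hβle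
    linarith
  -- prox facts
  have hfix : ∀ i y, f' i (z i y) = α⁻¹ • (y - z i y) := fun i y =>
    prox_fixed (f i) (f' i) L hL (hgrad i) (hlip i) α hα y (z i y) (hz i y)
  have hzfix : ∀ i (y : EuclideanSpace ℝ (Fin d)), α • f' i (z i y) = y - z i y := fun i y => by
    rw [hfix]; exact smul_inv_smul₀ (ne_of_gt hα) _
  have hmono : ∀ i (a b : EuclideanSpace ℝ (Fin d)),
      μ * ‖a - b‖^2 ≤ ⟪f' i a - f' i b, a - b⟫ := by
    intro i a b
    have h1 := hsc i a b
    have h2 := hsc i b a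
    have hrev : ‖b - a‖ = ‖a - b‖ := norm_sub_rev _ _
    rw [hrev] at h1
    have ha : ⟪f' i a, a - b⟫ = -⟪f' i a, b - a⟫ := by
      rw [show a - b = -(b - a) from by abel, inner_neg_right]
    rw [inner_sub_left, ha]
    linarith
  have hcvx : ∀ i (a b : EuclideanSpace ℝ (Fin d)),
      f i a + ⟪f' i a, b - a⟫ ≤ f i b := fun i a b => by
    have h1 := hsc i a b
    have h2 : 0 ≤ μ/2 * ‖b - a‖^2 := by positivity
    linarith
  have hcoco : ∀ i (a b : EuclideanSpace ℝ (Fin d)),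
      (1/(2*L)) * ‖f' i a - f' i b‖^2 ≤ ⟪f' i a - f' i b, a - b⟫ := fun i =>
    coco (f i) (f' i) L hL (hgrad i) (hlip i) (hcvx i)
  have hdecomp : ∀ i (a b : EuclideanSpace ℝ (Fin d)),
      a - b = (z i a - z i b) + α • (f' i (z i a) - f' i (z i b)) := fun i a b => by
    rw [smul_sub, hzfix i a, hzfix i b]; abel
  -- per-pair facts
  have pack : ∀ i (a b : EuclideanSpace ℝ (Fin d)),
      2*μ/3 * ‖a - b‖^2 ≤ ⟪f' i (z i a) - f' i (z i b), a - b⟫ ∧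
      (1/(2*L)) * ‖f' i (z i a) - f' i (z i b)‖^2 ≤ ⟪f' i (z i a) - f' i (z i b), a - b⟫ ∧
      ‖f' i (z i a) - f' i (z i b)‖ ≤ L * ‖a - b‖ := by
    intro i a b
    have hab : a - b = (z i a - z i b) + α • (f' i (z i a) - f' i (z i b)) := hdecomp i a b
    have hs : μ * ‖z i a - z i b‖^2 ≤ ⟪f' i (z i a) - f' i (z i b), z i a - z i b⟫ :=
      hmono i (z i a) (z i b)
    have hco : (1/(2*L)) * ‖f' i (z i a) - f' i (z i b)‖^2 ≤
        ⟪f' i (z i a) - f' i (z i b), z i a - z i b⟫ := hcoco i (z i a) (z i b)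
    have hlv : ‖f' i (z i a) - f' i (z i b)‖ ≤ L * ‖z i a - z i b‖ := hlip i _ _
    set u : EuclideanSpace ℝ (Fin d) := z i a - z i b with hu
    set v : EuclideanSpace ℝ (Fin d) := f' i (z i a) - f' i (z i b) with hv
    clear_value u v
    have hi1 : ⟪v, a - b⟫ = ⟪v, u⟫ + α * ‖v‖^2 := by
      rw [hab, inner_add_right, real_inner_smul_right, real_inner_self_eq_norm_sq]
    have hi2 : ‖a - b‖^2 = ‖u‖^2 + 2*α*⟪v,u⟫ + α^2*‖v‖^2 := by
      have hc : ⟪u, α • v⟫ = α * ⟪v, u⟫ := by rw [real_inner_smul_right, real_inner_comm]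
      rw [hab, norm_add_sq_real, hc, norm_smul, Real.norm_eq_abs, abs_of_pos hα, mul_pow]
      ring
    have hs0 : (0:ℝ) ≤ ⟪v, u⟫ := le_trans (by positivity) hs
    refine ⟨?_, ?_, ?_⟩
    · rw [hi1, hi2]
      exact pairmono (‖u‖^2) (‖v‖^2) ⟪v,u⟫ α μ (sq_nonneg _) (sq_nonneg _) hs hα hμ hαμ
    · rw [hi1]
      have := mul_nonneg hα.le (sq_nonneg ‖v‖)
      linarith
    · have ha2 : ‖u‖^2 ≤ ‖a - b‖^2 := by
        rw [hi2]
        nlinarith [mul_nonneg hα.le hs0, mul_nonneg (sq_nonneg α) (sq_nonneg ‖v‖)]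
      have hu_le : ‖u‖ ≤ ‖a - b‖ := by
        nlinarith [norm_nonneg u, norm_nonneg (a - b)]
      calc ‖v‖ ≤ L * ‖u‖ := hlv
        _ ≤ L * ‖a - b‖ := mul_le_mul_of_nonneg_left hu_le hL.le
  have herr : ∀ i (a : EuclideanSpace ℝ (Fin d)),
      ‖f' i (a - α • f' i a) - f' i (z i a)‖ ≤ α^2*L^2 * ‖f' i (z i a)‖ := by
    intro i a
    have h1 : ‖f' i (a - α • f' i a) - f' i (z i a)‖ ≤ L * ‖(a - α • f' i a) - z i a‖ :=
      hlip i _ _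
    have h2 : (a - α • f' i a) - z i a = α • (f' i (z i a) - f' i a) := by
      rw [smul_sub, hzfix i a]; abel
    have h3 : ‖(a - α • f' i a) - z i a‖ = α * ‖f' i (z i a) - f' i a‖ := by
      rw [h2, norm_smul, Real.norm_eq_abs, abs_of_pos hα]
    have h4 : ‖f' i (z i a) - f' i a‖ ≤ L * ‖z i a - a‖ := hlip i _ _
    have h5 : ‖z i a - a‖ = α * ‖f' i (z i a)‖ := by
      have he : z i a - a = -(α • f' i (z i a)) := by rw [hzfix i a]; abel
      rw [he, norm_neg, norm_smul, Real.norm_eq_abs, abs_of_pos hα]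
    rw [h3] at h1
    rw [h5] at h4
    nlinarith [norm_nonneg (f' i (z i a)), norm_nonneg (f' i (z i a) - f' i a),
      mul_pos hα hL, mul_nonneg hα.le hL.le]
  -- stationarity
  have hstar' : ∑ i : Fin n, f' i (z i xstar) = 0 := by
    simp only [hfix]; exact hstar
  have hσ0 : 0 ≤ σs := by
    rw [hσ]; positivity
  have hgs : ∑ i : Fin n, ‖f' i (z i xstar)‖^2 = (n:ℝ) * σs := by
    simp only [hfix]; rw [hσ]; field_simp
  have hRnn : (0:ℝ) ≤ ‖x - xstar‖ := norm_nonneg _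
  -- P lower bound
  have hP1 : 2*μ/3*((n:ℝ)*‖x - xstar‖^2) ≤ ∑ i : Fin n, ⟪f' i (z i x), x - xstar⟫ := by
    have e : ∀ i ∈ (Finset.univ : Finset (Fin n)), 2*μ/3 * ‖x - xstar‖^2 ≤
        ⟪f' i (z i x), x - xstar⟫ - ⟪f' i (z i xstar), x - xstar⟫ := by
      intro i _
      have h := (pack i x xstar).1
      rw [inner_sub_left] at h
      exact h
    have hsum := Finset.sum_le_sum e
    rw [Finset.sum_sub_distrib,
      show ∑ i : Fin n, ⟪f' i (z i xstar), x - xstar⟫ = (0:ℝ) by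
        rw [← sum_inner, hstar', inner_zero_left],
      sub_zero, Finset.sum_const, Finset.card_univ, Fintype.card_fin, nsmul_eq_mul] at hsum
    linarith
  -- cocoercivity sum
  have hQ2 : ∑ i : Fin n, ‖f' i (z i x) - f' i (z i xstar)‖^2
      ≤ 2*L*(∑ i : Fin n, ⟪f' i (z i x), x - xstar⟫) := by
    have e : ∀ i ∈ (Finset.univ : Finset (Fin n)),
        (1/(2*L)) * ‖f' i (z i x) - f' i (z i xstar)‖^2 ≤
        ⟪f' i (z i x), x - xstar⟫ - ⟪f' i (z i xstar), x - xstar⟫ := by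
      intro i _
      have h := (pack i x xstar).2.1
      rw [inner_sub_left] at h
      exact h
    have hsum := Finset.sum_le_sum e
    rw [Finset.sum_sub_distrib,
      show ∑ i : Fin n, ⟪f' i (z i xstar), x - xstar⟫ = (0:ℝ) by
        rw [← sum_inner, hstar', inner_zero_left],
      sub_zero, ← Finset.mul_sum] at hsum
    have h2 := mul_le_mul_of_nonneg_left hsum (by positivity : (0:ℝ) ≤ 2*L)
    have id : 2*L*((1/(2*L)) * ∑ i : Fin n, ‖f' i (z i x) - f' i (z i xstar)‖^2)
        = ∑ i : Fin n, ‖f' i (z i x) - f' i (z i xstar)‖^2 := by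
      field_simp
    rw [id] at h2
    exact h2
  have hglip : ∀ i, ‖f' i (z i x) - f' i (z i xstar)‖ ≤ L * ‖x - xstar‖ :=
    fun i => (pack i x xstar).2.2
  have hGb : ∀ i, ‖f' i (z i x)‖ ≤ ‖f' i (z i x) - f' i (z i xstar)‖ + ‖f' i (z i xstar)‖ :=
    fun i => by
      simpa using norm_add_le (f' i (z i x) - f' i (z i xstar)) (f' i (z i xstar))
  -- second moment bound
  have hHs2 : ∑ i : Fin n, ‖f' i (x - α • f' i x)‖^2
      ≤ 8*L*(∑ i : Fin n, ⟪f' i (z i x), x - xstar⟫) + 4*(n:ℝ)*σs := by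
    have e : ∀ i ∈ (Finset.univ : Finset (Fin n)),
        ‖f' i (x - α • f' i x)‖^2 ≤
        4*‖f' i (z i x) - f' i (z i xstar)‖^2 + 4*‖f' i (z i xstar)‖^2 := by
      intro i _
      apply sq_bound _ _ _ (α^2*L^2) (norm_nonneg _) (norm_nonneg _) (norm_nonneg _)
        (by positivity) hε
      have t1 : ‖f' i (x - α • f' i x)‖ ≤
          ‖f' i (z i x)‖ + ‖f' i (x - α • f' i x) - f' i (z i x)‖ := by
        simpa using norm_add_le (f' i (z i x)) (f' i (x - α • f' i x) - f' i (z i x))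
      have t2 := herr i x
      have t3 := hGb i
      have t4 := mul_le_mul_of_nonneg_left t3 (by positivity : (0:ℝ) ≤ 1 + α^2*L^2)
      nlinarith [t1, t2, t4, norm_nonneg (f' i (z i x)),
        mul_le_mul_of_nonneg_left t3 (by positivity : (0:ℝ) ≤ α^2*L^2)]
    have hsum := Finset.sum_le_sum e
    rw [Finset.sum_add_distrib, ← Finset.mul_sum, ← Finset.mul_sum, hgs] at hsum
    linarith [hQ2]
  -- inner product error bound
  have hPh : (∑ i : Fin n, ⟪f' i (z i x), x - xstar⟫)
      - (α^2*L^2)*((n:ℝ)*L*‖x - xstar‖^2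
        + ‖x - xstar‖*(∑ i : Fin n, ‖f' i (z i xstar)‖))
      ≤ ∑ i : Fin n, ⟪x - xstar, f' i (x - α • f' i x)⟫ := by
    have e : ∀ i ∈ (Finset.univ : Finset (Fin n)),
        ⟪f' i (z i x), x - xstar⟫ - ⟪x - xstar, f' i (x - α • f' i x)⟫
        ≤ α^2*L^2*(L*‖x - xstar‖^2)
          + (α^2*L^2*‖x - xstar‖)*‖f' i (z i xstar)‖ := by
      intro i _
      have c1 : ⟪x - xstar, f' i (x - α • f' i x)⟫ - ⟪x - xstar, f' i (z i x)⟫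
          = ⟪x - xstar, f' i (x - α • f' i x) - f' i (z i x)⟫ := by
        rw [← inner_sub_right]
      have c1b : ⟪x - xstar, f' i (z i x)⟫ = ⟪f' i (z i x), x - xstar⟫ :=
        real_inner_comm _ _
      have c2 : -(‖x - xstar‖ * ‖f' i (x - α • f' i x) - f' i (z i x)‖)
          ≤ ⟪x - xstar, f' i (x - α • f' i x) - f' i (z i x)⟫ := by
        have habs := abs_real_inner_le_norm (x - xstar) (f' i (x - α • f' i x) - f' i (z i x))
        linarith [neg_abs_le (⟪x - xstar, f' i (x - α • f' i x) - f' i (z i x)⟫ : ℝ)]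
      have c3 := herr i x
      have c4 : ‖f' i (z i x)‖ ≤ L*‖x - xstar‖ + ‖f' i (z i xstar)‖ :=
        le_trans (hGb i) (by linarith [hglip i])
      have c5 : ‖x - xstar‖ * ‖f' i (x - α • f' i x) - f' i (z i x)‖
          ≤ ‖x - xstar‖ * (α^2*L^2*‖f' i (z i x)‖) :=
        mul_le_mul_of_nonneg_left c3 hRnn
      have c6 : ‖x - xstar‖ * (α^2*L^2*‖f' i (z i x)‖)
          ≤ ‖x - xstar‖ * (α^2*L^2*(L*‖x - xstar‖ + ‖f' i (z i xstar)‖)) :=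
        mul_le_mul_of_nonneg_left (mul_le_mul_of_nonneg_left c4 (by positivity)) hRnn
      nlinarith [c1, c1b, c2, c5, c6]
    have hsum := Finset.sum_le_sum e
    rw [Finset.sum_sub_distrib, Finset.sum_add_distrib, Finset.sum_const, Finset.card_univ,
      Fintype.card_fin, nsmul_eq_mul, ← Finset.mul_sum] at hsum
    linarith [hsum]
  have hT0 : (0:ℝ) ≤ ∑ i : Fin n, ‖f' i (z i xstar)‖ :=
    Finset.sum_nonneg (fun i _ => norm_nonneg _)
  have hTsq : (∑ i : Fin n, ‖f' i (z i xstar)‖)^2 ≤ (n:ℝ)^2 * σs := by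
    have cs := Finset.sum_mul_sq_le_sq_mul_sq Finset.univ (fun _ : Fin n => (1:ℝ))
      (fun i => ‖f' i (z i xstar)‖)
    simp only [one_mul, one_pow, Finset.sum_const, Finset.card_univ, Fintype.card_fin,
      nsmul_eq_mul, mul_one] at cs
    rw [hgs] at cs
    linarith [cs]
  have scalar := scalar_core (n:ℝ) (‖x - xstar‖)
    (∑ i : Fin n, ⟪f' i (z i x), x - xstar⟫)
    (∑ i : Fin n, ⟪x - xstar, f' i (x - α • f' i x)⟫)
    (∑ i : Fin n, ‖f' i (x - α • f' i x)‖^2)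
    (∑ i : Fin n, ‖f' i (z i xstar)‖) σs β μ L (α^2*L^2) (β/(τ:ℝ))
    hμ hμL hβ hβL (by positivity) hε hεL
    (by exact_mod_cast hn) hRnn hσ0 hT0 hTsq (by positivity) hP1 hPh hHs2
  -- combinatorial aggregation
  have hswap : ∀ (ψ : Fin n → ℝ), (n:ℝ) * ∑ b : Fin τ → Fin n, ∑ j : Fin τ, ψ (b j)
      = (Fintype.card (Fin τ → Fin n) : ℝ) * ((τ:ℝ) * ∑ i : Fin n, ψ i) := by
    intro ψ
    rw [Finset.sum_comm, Finset.mul_sum,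
      Finset.sum_congr rfl (fun j (_ : j ∈ Finset.univ) => sum_eval j ψ),
      Finset.sum_const, Finset.card_univ, Fintype.card_fin, nsmul_eq_mul]
    ring
  have expand : ∀ b : Fin τ → Fin n,
      ‖(x - (β / (τ : ℝ)) • ∑ j : Fin τ, f' (b j) (x - α • f' (b j) x)) - xstar‖ ^ 2
        ≤ ‖x - xstar‖^2
          - 2*(β/(τ:ℝ)) * ∑ j : Fin τ, ⟪x - xstar, f' (b j) (x - α • f' (b j) x)⟫
          + (β/(τ:ℝ))^2 * ((τ:ℝ) * ∑ j : Fin τ, ‖f' (b j) (x - α • f' (b j) x)‖^2) := by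
    intro b
    have h0 : (x - (β / (τ : ℝ)) • ∑ j : Fin τ, f' (b j) (x - α • f' (b j) x)) - xstar
        = (x - xstar) - (β / (τ : ℝ)) • ∑ j : Fin τ, f' (b j) (x - α • f' (b j) x) := by
      abel
    rw [h0, norm_sub_sq_real, real_inner_smul_right, inner_sum, norm_smul, mul_pow,
      Real.norm_eq_abs, sq_abs]
    have h1 := norm_sum_sq (fun j : Fin τ => f' (b j) (x - α • f' (b j) x))
    have h2 := mul_le_mul_of_nonneg_left h1 (sq_nonneg (β/(τ:ℝ)))
    linarith [h2]
  have main := Finset.sum_le_sum (fun b (_ : b ∈ Finset.univ) => expand b)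
  have e1 := hswap (fun i => ⟪x - xstar, f' i (x - α • f' i x)⟫)
  have e2 := hswap (fun i => ‖f' i (x - α • f' i x)‖^2)
  have keyeq : (n:ℝ) * (∑ b : Fin τ → Fin n, (‖x - xstar‖^2
          - 2*(β/(τ:ℝ)) * ∑ j : Fin τ, ⟪x - xstar, f' (b j) (x - α • f' (b j) x)⟫
          + (β/(τ:ℝ))^2 * ((τ:ℝ) * ∑ j : Fin τ, ‖f' (b j) (x - α • f' (b j) x)‖^2)))
      = (Fintype.card (Fin τ → Fin n) : ℝ) * ((n:ℝ)*‖x - xstar‖^2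
          - 2*((β/(τ:ℝ))*(τ:ℝ))*(∑ i : Fin n, ⟪x - xstar, f' i (x - α • f' i x)⟫)
          + ((β/(τ:ℝ))*(τ:ℝ))^2*(∑ i : Fin n, ‖f' i (x - α • f' i x)‖^2)) := by
    simp only [Finset.sum_add_distrib, Finset.sum_sub_distrib, ← Finset.mul_sum,
      Finset.sum_const, Finset.card_univ, Fintype.card_fin, nsmul_eq_mul]
    linear_combination (-(2:ℝ)*(β/(τ:ℝ)))*e1 + ((β/(τ:ℝ))^2*(τ:ℝ))*e2
  have hc : (β/(τ:ℝ))*(τ:ℝ) = β := div_mul_cancel₀ β (ne_of_gt hτ0)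
  rw [hc] at keyeq
  have mainN := mul_le_mul_of_nonneg_left main (le_of_lt hn0)
  rw [keyeq] at mainN
  have scalarN := mul_le_mul_of_nonneg_left scalar
    (Nat.cast_nonneg (Fintype.card (Fin τ → Fin n)))
  -- combine
  have hfin : (n:ℝ) * (∑ b : Fin τ → Fin n,
      ‖(x - (β / (τ : ℝ)) • ∑ j : Fin τ, f' (b j) (x - α • f' (b j) x)) - xstar‖ ^ 2)
      ≤ (n:ℝ) * ((Fintype.card (Fin τ → Fin n) : ℝ) *
        ((1 - β * μ / 4) * ‖x - xstar‖ ^ 2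
          + 4 * β * (2 * α ^ 2 * L ^ 2 / μ + β / (τ : ℝ) + β) * σs)) := by
    exact le_trans mainN (le_trans scalarN (le_of_eq (by ring)))
  exact le_of_mul_le_mul_left hfin hn0

/-- Convergence of FO-MAML (weak result, Theorem 4 of the paper).
Task losses f_i are L-smooth and μ-strongly convex, α ≤ 1/(4√κ L), β ≤ 1/(20L),
z_i(x) is the unique prox point, ∇F_i(x) = (x − z_i(x))/α, x* a stationary point of
the Moreau objective, σ*² the gradient variance at x*.  The FO-MAML iterates
x^{t+1} = x^t − (β/τ)Σ_j ∇f_{i_{t,j}}(x^t − α∇f_{i_{t,j}}(x^t)) over histories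
S ∈ ({1,…,n}^τ)^k satisfy, on uniform average over S,
E‖x^k − x*‖² ≤ (1 − βμ/4)^k‖x^0 − x*‖² + (16/μ)(2α²L²/μ + β/τ + β)σ*². -/
theorem fomaml_convergence_weak {d : ℕ} (n τ k : ℕ)
    (hn : 1 ≤ n) (hτ : 1 ≤ τ) (hk : 1 ≤ k)
    (L μ : ℝ) (hμ : 0 < μ) (hμL : μ ≤ L)
    (f : Fin n → EuclideanSpace ℝ (Fin d) → ℝ)
    (f' : Fin n → EuclideanSpace ℝ (Fin d) → EuclideanSpace ℝ (Fin d))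
    (hgrad : ∀ i x, HasGradientAt (f i) (f' i x) x)
    (hlip : ∀ i x y, ‖f' i x - f' i y‖ ≤ L * ‖x - y‖)
    (hsc : ∀ i x y, f i x + @inner ℝ _ _ (f' i x) (y - x) + μ / 2 * ‖y - x‖ ^ 2 ≤ f i y)
    (α β : ℝ) (hα : 0 < α) (hαle : α ≤ 1 / (4 * Real.sqrt (L / μ) * L))
    (hβ : 0 < β) (hβle : β ≤ 1 / (20 * L))
    (z : Fin n → EuclideanSpace ℝ (Fin d) → EuclideanSpace ℝ (Fin d))
    (hz : ∀ i x, IsMinOn (fun w => f i w + ‖w - x‖ ^ 2 / (2 * α)) Set.univ (z i x))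
    (hzu : ∀ i x w, IsMinOn (fun w' => f i w' + ‖w' - x‖ ^ 2 / (2 * α)) Set.univ w →
      w = z i x)
    (xstar : EuclideanSpace ℝ (Fin d))
    (hstar : ∑ i : Fin n, α⁻¹ • (xstar - z i xstar) = 0)
    (σs : ℝ) (hσ : σs = (1 / (n : ℝ)) * ∑ i : Fin n, ‖α⁻¹ • (xstar - z i xstar)‖ ^ 2)
    (x0 : EuclideanSpace ℝ (Fin d))
    (X : (Fin k → Fin τ → Fin n) → ℕ → EuclideanSpace ℝ (Fin d))
    (hX0 : ∀ S, X S 0 = x0)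
    (hXrec : ∀ S (t : Fin k), X S (t.val + 1) =
      X S t.val - (β / (τ : ℝ)) • ∑ j : Fin τ,
        f' (S t j) (X S t.val - α • f' (S t j) (X S t.val))) :
    (∑ S : Fin k → Fin τ → Fin n, ‖X S k - xstar‖ ^ 2) /
        (Fintype.card (Fin k → Fin τ → Fin n) : ℝ) ≤
      (1 - β * μ / 4) ^ k * ‖x0 - xstar‖ ^ 2 +
        (16 / μ) * (2 * α ^ 2 * L ^ 2 / μ + β / (τ : ℝ) + β) * σs := by
  classical
  have hL : (0:ℝ) < L := lt_of_lt_of_le hμ hμL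
  haveI hne : Nonempty (Fin n) := ⟨⟨0, lt_of_lt_of_le Nat.zero_lt_one hn⟩⟩
  have hNb0 : (0:ℝ) < (Fintype.card (Fin τ → Fin n) : ℝ) := by
    exact_mod_cast Fintype.card_pos
  have hN0 : (0:ℝ) < (Fintype.card (Fin k → Fin τ → Fin n) : ℝ) := by
    exact_mod_cast Fintype.card_pos
  have hβμ : β * μ ≤ 1/20 := by
    have h1 : β * (20 * L) ≤ 1 := (le_div_iff₀ (by positivity)).mp hβle
    nlinarith
  have hρ0 : (0:ℝ) ≤ 1 - β*μ/4 := by linarith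
  have hρ1 : 1 - β*μ/4 ≤ 1 := by nlinarith [mul_pos hβ hμ]
  have hσ0 : 0 ≤ σs := by rw [hσ]; positivity
  have hK0 : 0 ≤ (16/μ) * (2*α^2*L^2/μ + β/(τ:ℝ) + β) * σs := by positivity
  -- independence of future coordinates
  have hind : ∀ t : ℕ, t ≤ k → ∀ S S' : Fin k → Fin τ → Fin n,
      (∀ t' : Fin k, (t' : ℕ) < t → S t' = S' t') → X S t = X S' t := by
    intro t
    induction t with
    | zero => intro _ S S' _; rw [hX0, hX0]
    | succ t ih =>
      intro ht S S' hagree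
      have htk : t < k := Nat.lt_of_succ_le ht
      have h1 := hXrec S ⟨t, htk⟩
      have h2 := hXrec S' ⟨t, htk⟩
      simp only at h1 h2
      rw [h1, h2]
      have hXeq : X S t = X S' t :=
        ih (le_of_lt htk) S S' (fun t' h => hagree t' (Nat.lt_succ_of_lt h))
      have hSeq : S ⟨t, htk⟩ = S' ⟨t, htk⟩ := hagree ⟨t, htk⟩ (Nat.lt_succ_self t)
      rw [hXeq, hSeq]
  -- one-step recursion for the sums
  have hstep : ∀ t : Fin k,
      ∑ S : Fin k → Fin τ → Fin n, ‖X S (t.val + 1) - xstar‖^2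
        ≤ (1 - β*μ/4) * ∑ S : Fin k → Fin τ → Fin n, ‖X S t.val - xstar‖^2
          + (Fintype.card (Fin k → Fin τ → Fin n) : ℝ) *
            (4 * β * (2 * α ^ 2 * L ^ 2 / μ + β / (τ : ℝ) + β) * σs) := by
    intro t
    set e := Equiv.funSplitAt t (Fin τ → Fin n) with he
    have hre : ∀ (φ : (Fin k → Fin τ → Fin n) → ℝ),
        ∑ S, φ S = ∑ p : (Fin τ → Fin n) × ({ j // j ≠ t } → Fin τ → Fin n), φ (e.symm p) :=
      fun φ => (Equiv.sum_comp e.symm φ).symm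
    rw [hre (fun S => ‖X S (t.val + 1) - xstar‖^2), hre (fun S => ‖X S t.val - xstar‖^2),
      Fintype.sum_prod_type_right, Fintype.sum_prod_type_right]
    have hper : ∀ rest : { j // j ≠ t } → Fin τ → Fin n,
        ∑ a : Fin τ → Fin n, ‖X (e.symm (a, rest)) (t.val + 1) - xstar‖^2
          ≤ (1 - β*μ/4) * ∑ a : Fin τ → Fin n, ‖X (e.symm (a, rest)) t.val - xstar‖^2
            + (Fintype.card (Fin τ → Fin n) : ℝ) *
              (4 * β * (2 * α ^ 2 * L ^ 2 / μ + β / (τ : ℝ) + β) * σs) := by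
      intro rest
      have hxbar : ∀ a : Fin τ → Fin n,
          X (e.symm (a, rest)) t.val = X (e.symm ((fun _ => Classical.arbitrary (Fin n)), rest)) t.val := by
        intro a
        apply hind t.val (le_of_lt t.isLt)
        intro t' ht'
        have hne' : t' ≠ t := fun h => absurd ht' (by rw [h]; exact lt_irrefl _)
        simp [he, Equiv.funSplitAt, hne']
      set xb := X (e.symm ((fun _ => Classical.arbitrary (Fin n)), rest)) t.val with hxb
      have hrec : ∀ a : Fin τ → Fin n, X (e.symm (a, rest)) (t.val + 1)
          = xb - (β/(τ:ℝ)) • ∑ j : Fin τ, f' (a j) (xb - α • f' (a j) xb) := by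
        intro a
        have h := hXrec (e.symm (a, rest)) t
        have hat : e.symm (a, rest) t = a := by simp [he, Equiv.funSplitAt]
        rw [hat, hxbar a] at h
        exact h
      have hconst : ∑ a : Fin τ → Fin n, ‖X (e.symm (a, rest)) t.val - xstar‖^2
          = (Fintype.card (Fin τ → Fin n) : ℝ) * ‖xb - xstar‖^2 := by
        rw [Finset.sum_congr rfl (fun a _ => by rw [hxbar a]), Finset.sum_const,
          Finset.card_univ, nsmul_eq_mul]
      calc ∑ a : Fin τ → Fin n, ‖X (e.symm (a, rest)) (t.val + 1) - xstar‖^2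
          = ∑ a : Fin τ → Fin n,
              ‖(xb - (β/(τ:ℝ)) • ∑ j : Fin τ, f' (a j) (xb - α • f' (a j) xb)) - xstar‖^2 :=
            Finset.sum_congr rfl (fun a _ => by rw [hrec a])
        _ ≤ (Fintype.card (Fin τ → Fin n) : ℝ) *
              ((1 - β * μ / 4) * ‖xb - xstar‖ ^ 2
                + 4 * β * (2 * α ^ 2 * L ^ 2 / μ + β / (τ : ℝ) + β) * σs) :=
            core_step n τ hn hτ L μ hμ hμL f f' hgrad hlip hsc α β hα hαle hβ hβle
              z hz xstar hstar σs hσ xb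
        _ = (1 - β*μ/4) * ∑ a : Fin τ → Fin n, ‖X (e.symm (a, rest)) t.val - xstar‖^2
            + (Fintype.card (Fin τ → Fin n) : ℝ) *
              (4 * β * (2 * α ^ 2 * L ^ 2 / μ + β / (τ : ℝ) + β) * σs) := by
            rw [hconst]; ring
    have hcard : (Fintype.card (Fin k → Fin τ → Fin n) : ℝ)
        = (Fintype.card ({ j // j ≠ t } → Fin τ → Fin n) : ℝ) *
          (Fintype.card (Fin τ → Fin n) : ℝ) := by
      rw [Fintype.card_congr e, Fintype.card_prod]
      push_cast
      ring
    calc ∑ rest : { j // j ≠ t } → Fin τ → Fin n, ∑ a : Fin τ → Fin n,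
            ‖X (e.symm (a, rest)) (t.val + 1) - xstar‖^2
        ≤ ∑ rest : { j // j ≠ t } → Fin τ → Fin n,
            ((1 - β*μ/4) * ∑ a : Fin τ → Fin n, ‖X (e.symm (a, rest)) t.val - xstar‖^2
              + (Fintype.card (Fin τ → Fin n) : ℝ) *
                (4 * β * (2 * α ^ 2 * L ^ 2 / μ + β / (τ : ℝ) + β) * σs)) :=
          Finset.sum_le_sum (fun rest _ => hper rest)
      _ = (1 - β*μ/4) * ∑ rest : { j // j ≠ t } → Fin τ → Fin n, ∑ a : Fin τ → Fin n,
            ‖X (e.symm (a, rest)) t.val - xstar‖^2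
          + (Fintype.card (Fin k → Fin τ → Fin n) : ℝ) *
            (4 * β * (2 * α ^ 2 * L ^ 2 / μ + β / (τ : ℝ) + β) * σs) := by
          rw [Finset.sum_add_distrib, ← Finset.mul_sum, Finset.sum_const, Finset.card_univ,
            nsmul_eq_mul, hcard]
          ring
  -- full induction
  have hmain : ∀ t : ℕ, t ≤ k →
      ∑ S : Fin k → Fin τ → Fin n, ‖X S t - xstar‖^2
        ≤ (Fintype.card (Fin k → Fin τ → Fin n) : ℝ) *
          ((1 - β*μ/4)^t * ‖x0 - xstar‖^2
            + (1 - (1 - β*μ/4)^t) * ((16/μ) * (2*α^2*L^2/μ + β/(τ:ℝ) + β) * σs)) := by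
    intro t
    induction t with
    | zero =>
      intro _
      simp only [pow_zero, hX0]
      rw [Finset.sum_const, Finset.card_univ, nsmul_eq_mul]
      ring_nf
      exact le_refl _
    | succ t ih =>
      intro ht
      have htk : t < k := Nat.lt_of_succ_le ht
      have hstep' := hstep ⟨t, htk⟩
      have ihk := ih (le_of_lt htk)
      have hmul := mul_le_mul_of_nonneg_left ihk hρ0
      simp only at hstep'
      have hCeq : 4 * β * (2 * α ^ 2 * L ^ 2 / μ + β / (τ : ℝ) + β) * σs
          = (β*μ/4) * ((16/μ) * (2*α^2*L^2/μ + β/(τ:ℝ) + β) * σs) := by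
        field_simp
        ring
      calc ∑ S : Fin k → Fin τ → Fin n, ‖X S (t+1) - xstar‖^2
          ≤ (1 - β*μ/4) * ∑ S : Fin k → Fin τ → Fin n, ‖X S t - xstar‖^2
            + (Fintype.card (Fin k → Fin τ → Fin n) : ℝ) *
              (4 * β * (2 * α ^ 2 * L ^ 2 / μ + β / (τ : ℝ) + β) * σs) := hstep'
        _ ≤ (1 - β*μ/4) * ((Fintype.card (Fin k → Fin τ → Fin n) : ℝ) *
              ((1 - β*μ/4)^t * ‖x0 - xstar‖^2
                + (1 - (1 - β*μ/4)^t) * ((16/μ) * (2*α^2*L^2/μ + β/(τ:ℝ) + β) * σs)))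
            + (Fintype.card (Fin k → Fin τ → Fin n) : ℝ) *
              (4 * β * (2 * α ^ 2 * L ^ 2 / μ + β / (τ : ℝ) + β) * σs) := by
            linarith [hmul]
        _ = (Fintype.card (Fin k → Fin τ → Fin n) : ℝ) *
              ((1 - β*μ/4)^(t+1) * ‖x0 - xstar‖^2
                + (1 - (1 - β*μ/4)^(t+1)) * ((16/μ) * (2*α^2*L^2/μ + β/(τ:ℝ) + β) * σs)) := by
            rw [hCeq]; ring
  -- conclude
  have hfin := hmain k (le_refl k)
  rw [div_le_iff₀ hN0]
  calc ∑ S : Fin k → Fin τ → Fin n, ‖X S k - xstar‖^2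
      ≤ (Fintype.card (Fin k → Fin τ → Fin n) : ℝ) *
        ((1 - β*μ/4)^k * ‖x0 - xstar‖^2
          + (1 - (1 - β*μ/4)^k) * ((16/μ) * (2*α^2*L^2/μ + β/(τ:ℝ) + β) * σs)) := hfin
    _ ≤ ((1 - β * μ / 4) ^ k * ‖x0 - xstar‖ ^ 2 +
        (16 / μ) * (2 * α ^ 2 * L ^ 2 / μ + β / (τ : ℝ) + β) * σs) *
        (Fintype.card (Fin k → Fin τ → Fin n) : ℝ) := by
      have hp := mul_nonneg (mul_nonneg hN0.le (pow_nonneg hρ0 k)) hK0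
      linarith [hp]
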